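/- w(ω × ω × ω) = ω², where the triple product of ω carries the componentwise order. -/

import Mathlib

/-!
Upper bound: in an antichain sequence with first element `x`, every later point `q` is
incomparable to `x`, so it lies in one of the finitely many planes `{p | coord i p = v}` with
`v < coord i x`. The points of such a plane form an antichain of `ℕ × ℕ`, and an antichain of
`ℕ × ℕ` containing `y` has at most `y.1 + y.2 + 1` elements. So the pair (number of planes still
empty, room left in the others) decreases lexicographically along the sequence, and the tree has
rank at most `ω²`.

Lower bound: if every point `p` with `X ≤ p.1` and `(p.2.2, p.2.1) <lex (m, n)` is incomparable to
all points of a node, then appending `(X, n, m)` preserves this for `X + 1` and the lexicographic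
predecessor of `(m, n)`; hence the node has rank at least `ω * m + n`.
-/

universe u

open Ordinal

/-- The rank of a well-founded relation: the least ordinal `γ` admitting a
strictly `r`-decreasing... i.e. `r a b → f a < f b`; equals `sup (rank a + 1)`. -/
noncomputable def relRank {β : Type u} (r : β → β → Prop) : Ordinal.{u} :=
  haveI := Classical.propDecidable (WellFounded r)
  if h : WellFounded r then ⨆ a : β, Order.succ ((h.apply a).rank) else 0

/-- `extRel T s t` : `s` strictly extends `t` (both in tree `T`). -/
def extRel {α : Type u} (T : Set (List α)) (s t : T) : Prop :=
  t.1 <+: s.1 ∧ t.1 ≠ s.1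

/-- Rank of a tree of finite sequences ordered by the initial segment relation. -/
noncomputable def treeRank {α : Type u} (T : Set (List α)) : Ordinal.{u} :=
  relRank (extRel T)

/-- Non-empty finite sequences of pairwise incomparable elements. -/
def IncSeqs (P : Type u) [Preorder P] : Set (List P) :=
  {l | l ≠ [] ∧ l.Pairwise fun x y => ¬ x ≤ y ∧ ¬ y ≤ x}

/-- Non-empty strictly descending finite sequences. -/
def DecSeqs (P : Type u) [Preorder P] : Set (List P) :=
  {l | l ≠ [] ∧ l.Pairwise fun x y => y < x}

/-- Non-empty bad sequences. -/
def BadSeqs (P : Type u) [Preorder P] : Set (List P) :=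
  {l | l ≠ [] ∧ l.Pairwise fun x y => ¬ x ≤ y}

/-- Width of a FAC (quasi-)order: the rank of its tree of antichain sequences. -/
noncomputable def width (P : Type u) [Preorder P] : Ordinal.{u} := treeRank (IncSeqs P)

/-- Height: the rank of the tree of strictly descending sequences. -/
noncomputable def height (P : Type u) [Preorder P] : Ordinal.{u} := treeRank (DecSeqs P)

/-- Maximal order type: the rank of the tree of bad sequences. -/
noncomputable def mot (P : Type u) [Preorder P] : Ordinal.{u} := treeRank (BadSeqs P)

/-- Finite antichain condition. -/
def FAC (P : Type u) [Preorder P] : Prop :=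
  ∀ A : Set P, IsAntichain (· ≤ ·) A → A.Finite

/-- Well quasi-order: every infinite sequence is good. -/
def IsWQO (P : Type u) [Preorder P] : Prop :=
  ∀ f : ℕ → P, ∃ i j : ℕ, i < j ∧ f i ≤ f j

/-- Well partial order. -/
def IsWPO (P : Type u) [Preorder P] : Prop :=
  WellFounded ((· < ·) : P → P → Prop) ∧ FAC P

section Rank

variable {β : Type u} {r : β → β → Prop} {F : β → Ordinal.{u}}

theorem Acc.rank_le_of_map_lt (hF : ∀ a b, r a b → F a < F b) {a : β} (h : Acc r a) :
    h.rank ≤ F a := by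
  induction h with
  | intro a _ ih =>
    rw [Acc.rank_eq]
    exact Ordinal.iSup_le fun b => Order.succ_le_of_lt ((ih b b.2).trans_lt (hF b a b.2))

theorem wellFounded_of_map_lt (hF : ∀ a b, r a b → F a < F b) : WellFounded r :=
  Subrelation.wf (hF _ _) (InvImage.wf F wellFounded_lt)

theorem relRank_le_of_map_lt (hF : ∀ a b, r a b → F a < F b) {Λ : Ordinal.{u}}
    (hΛ : ∀ a, F a < Λ) : relRank r ≤ Λ := by
  rw [relRank, dif_pos (wellFounded_of_map_lt hF)]
  exact Ordinal.iSup_le fun a =>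
    Order.succ_le_of_lt ((Acc.rank_le_of_map_lt hF _).trans_lt (hΛ a))

theorem rank_lt_relRank [IsWellFounded β r] (a : β) : IsWellFounded.rank r a < relRank r := by
  rw [relRank, dif_pos IsWellFounded.wf]
  exact (Order.lt_succ _).trans_le
    (Ordinal.le_iSup (fun a => Order.succ (IsWellFounded.rank r a)) a)

end Rank

theorem fst_ne_and_snd_ne_of_incompRel {x y : ℕ × ℕ} (h : IncompRel (· ≤ ·) x y) :
    x.1 ≠ y.1 ∧ x.2 ≠ y.2 := by
  simp only [IncompRel, Prod.le_def] at h
  omega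

theorem List.length_le_of_pairwise_map_ne {α : Type*} {l : List α} {f : α → ℕ} {k : ℕ}
    (hl : l.Pairwise (f · ≠ f ·)) (hf : ∀ a ∈ l, f a < k) : l.length ≤ k := by
  simpa using (List.Nodup.subperm (l₂ := List.range k) (List.pairwise_map.2 hl)
    (by simpa [List.subset_def] using hf)).length_le

theorem length_le_of_pairwise_incompRel {b : ℕ × ℕ} {t : List (ℕ × ℕ)}
    (h : (b :: t).Pairwise (IncompRel (· ≤ ·))) : t.length ≤ b.1 + b.2 := by
  obtain ⟨hb, ht⟩ := List.pairwise_cons.1 h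
  rw [List.length_eq_countP_add_countP (fun p => p.1 < b.1), List.countP_eq_length_filter,
    List.countP_eq_length_filter]
  refine add_le_add
    (List.length_le_of_pairwise_map_ne
      ((ht.filter _).imp fun h => (fst_ne_and_snd_ne_of_incompRel h).1) ?_)
    (List.length_le_of_pairwise_map_ne
      ((ht.filter _).imp fun h => (fst_ne_and_snd_ne_of_incompRel h).2) ?_)
  · intro p hp
    simpa using (List.mem_filter.1 hp).2
  · intro p hp
    obtain ⟨hpt, hpb⟩ := List.mem_filter.1 hp
    have := hb p hpt
    simp only [IncompRel, Prod.le_def, decide_eq_true_eq] at this hpb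
    omega

def coord : Fin 3 → ℕ × ℕ × ℕ → ℕ
  | 0, p => p.1
  | 1, p => p.2.1
  | 2, p => p.2.2

def dropCoord : Fin 3 → ℕ × ℕ × ℕ → ℕ × ℕ
  | 0, p => (p.2.1, p.2.2)
  | 1, p => (p.2.2, p.1)
  | 2, p => (p.1, p.2.1)

theorem le_iff_coord_le_and_dropCoord_le (i : Fin 3) {p q : ℕ × ℕ × ℕ} :
    p ≤ q ↔ coord i p ≤ coord i q ∧ dropCoord i p ≤ dropCoord i q := by
  fin_cases i <;> simp only [coord, dropCoord, Prod.le_def] <;> tauto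

theorem exists_coord_lt_of_not_le {p q : ℕ × ℕ × ℕ} (h : ¬ q ≤ p) :
    ∃ i, coord i p < coord i q := by
  by_contra! hc
  exact h (Prod.le_def.2 ⟨hc 0, Prod.le_def.2 ⟨hc 1, hc 2⟩⟩)

theorem incompRel_dropCoord {i : Fin 3} {p q : ℕ × ℕ × ℕ} (h : coord i p = coord i q)
    (hpq : IncompRel (· ≤ ·) p q) : IncompRel (· ≤ ·) (dropCoord i p) (dropCoord i q) := by
  simp only [IncompRel, le_iff_coord_le_and_dropCoord_le i, h, le_refl, true_and] at hpq
  exact hpq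

def slice (i : Fin 3) (v : ℕ) (l : List (ℕ × ℕ × ℕ)) : List (ℕ × ℕ × ℕ) :=
  l.filter (coord i · = v)

def sliceValue (i : Fin 3) (v : ℕ) (l : List (ℕ × ℕ × ℕ)) : ℕ ×ₗ ℕ :=
  match slice i v l with
  | [] => toLex (1, 0)
  | y :: t => toLex (0, (dropCoord i y).1 + (dropCoord i y).2 - t.length)

theorem sliceValue_append_of_slice_eq_nil {i : Fin 3} {v : ℕ} (l : List (ℕ × ℕ × ℕ))
    {u : List (ℕ × ℕ × ℕ)} (hu : slice i v u = []) : sliceValue i v (l ++ u) = sliceValue i v l := by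
  simp only [sliceValue, slice, List.filter_append] at hu ⊢
  rw [hu, List.append_nil]

theorem length_slice_tail_le {i : Fin 3} {v : ℕ} {l : List (ℕ × ℕ × ℕ)}
    (hl : l.Pairwise (IncompRel (· ≤ ·))) {y : ℕ × ℕ × ℕ} {t : List (ℕ × ℕ × ℕ)}
    (h : slice i v l = y :: t) : t.length ≤ (dropCoord i y).1 + (dropCoord i y).2 := by
  have hcoord : ∀ p ∈ y :: t, coord i p = v := fun p hp => by
    rw [← h, slice, List.mem_filter] at hp
    simpa using hp.2
  have hpw : (y :: t).Pairwise (IncompRel (· ≤ ·)) := h ▸ hl.filter _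
  simpa using length_le_of_pairwise_incompRel (List.pairwise_map.2 (hpw.imp_of_mem
    fun hp hq hpq => incompRel_dropCoord ((hcoord _ hp).trans (hcoord _ hq).symm) hpq))

theorem sliceValue_append_lt {i : Fin 3} {v : ℕ} {l u : List (ℕ × ℕ × ℕ)}
    (h : (l ++ u).Pairwise (IncompRel (· ≤ ·))) (hu : slice i v u ≠ []) :
    sliceValue i v (l ++ u) < sliceValue i v l := by
  have happ : slice i v (l ++ u) = slice i v l ++ slice i v u := List.filter_append _ _
  rcases hl : slice i v l with _ | ⟨y, t⟩
  · obtain ⟨z, s, hs⟩ := List.exists_cons_of_ne_nil hu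
    rw [hl, List.nil_append, hs] at happ
    simp [sliceValue, happ, hl, Prod.Lex.toLex_lt_toLex]
  · rw [hl, List.cons_append] at happ
    have hroom := length_slice_tail_le h happ
    have hpos : 0 < (slice i v u).length := List.length_pos_iff.2 hu
    simp only [sliceValue, happ, hl, Prod.Lex.toLex_lt_toLex, List.length_append, lt_self_iff_false,
      false_or, true_and] at hroom ⊢
    omega

theorem sliceValue_append_le {i : Fin 3} {v : ℕ} {l u : List (ℕ × ℕ × ℕ)}
    (h : (l ++ u).Pairwise (IncompRel (· ≤ ·))) : sliceValue i v (l ++ u) ≤ sliceValue i v l := by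
  by_cases hu : slice i v u = []
  · exact (sliceValue_append_of_slice_eq_nil l hu).le
  · exact (sliceValue_append_lt h hu).le

def planesBelow (x : ℕ × ℕ × ℕ) : Finset (Σ _ : Fin 3, ℕ) :=
  Finset.univ.sigma fun i => Finset.range (coord i x)

def potential (l : List (ℕ × ℕ × ℕ)) : ℕ ×ₗ ℕ :=
  ∑ h ∈ planesBelow l.headI, sliceValue h.1 h.2 l

theorem potential_append_lt {l u : List (ℕ × ℕ × ℕ)} (hl : l ≠ []) (hu : u ≠ [])
    (h : (l ++ u).Pairwise (IncompRel (· ≤ ·))) : potential (l ++ u) < potential l := by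
  obtain ⟨x, t, rfl⟩ := List.exists_cons_of_ne_nil hl
  obtain ⟨q, s, rfl⟩ := List.exists_cons_of_ne_nil hu
  have hxq : IncompRel (· ≤ ·) x q := List.rel_of_pairwise_cons h (by simp)
  obtain ⟨i, hi⟩ := exists_coord_lt_of_not_le hxq.1
  simp only [potential, List.cons_append, List.headI_cons]
  refine Finset.sum_lt_sum (fun _ _ => sliceValue_append_le h) ⟨⟨i, coord i q⟩, ?_, ?_⟩
  · simpa [planesBelow] using hi
  · refine sliceValue_append_lt h ?_
    simp [slice]

def lexToOrdinal (p : ℕ ×ₗ ℕ) : Ordinal.{0} := ω * (ofLex p).1 + (ofLex p).2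

theorem lexToOrdinal_strictMono : StrictMono lexToOrdinal := by
  rintro ⟨a, b⟩ ⟨c, d⟩ h
  rcases Prod.Lex.toLex_lt_toLex.1 h with hac | ⟨rfl, hbd⟩
  · calc lexToOrdinal (toLex (a, b)) < ω * a + ω := add_lt_add_right (natCast_lt_omega0 b) _
      _ = ω * ((a + 1 : ℕ) : Ordinal) := by rw [Nat.cast_add_one, mul_add_one]
      _ ≤ ω * c := mul_le_mul_right (Nat.cast_le.2 hac) _
      _ ≤ lexToOrdinal (toLex (c, d)) := le_self_add
  · exact add_lt_add_right (Nat.cast_lt.2 hbd) _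

theorem lexToOrdinal_lt_omega0_sq (p : ℕ ×ₗ ℕ) : lexToOrdinal p < ω ^ 2 :=
  calc lexToOrdinal p < ω * (ofLex p).1 + ω := add_lt_add_right (natCast_lt_omega0 _) _
    _ = ω * ((ofLex p).1 + 1 : ℕ) := by rw [Nat.cast_add_one, mul_add_one]
    _ < ω ^ 2 := by rw [sq]; exact mul_lt_mul_of_pos_left (natCast_lt_omega0 _) omega0_pos

theorem potential_lt_of_extRel {s t : IncSeqs (ℕ × ℕ × ℕ)} (h : extRel _ s t) :
    lexToOrdinal (potential s.1) < lexToOrdinal (potential t.1) := by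
  obtain ⟨⟨u, hs⟩, hne⟩ := h
  rw [← hs] at hne ⊢
  refine lexToOrdinal_strictMono (potential_append_lt t.2.1 ?_ (hs ▸ s.2.2))
  rintro rfl
  exact hne (List.append_nil _).symm

theorem width_le_omega0_sq : width (ℕ × ℕ × ℕ) ≤ ω ^ 2 :=
  relRank_le_of_map_lt (fun _ _ h => potential_lt_of_extRel h) fun _ => lexToOrdinal_lt_omega0_sq _

instance : IsWellFounded (IncSeqs (ℕ × ℕ × ℕ)) (extRel (IncSeqs (ℕ × ℕ × ℕ))) :=
  ⟨wellFounded_of_map_lt fun _ _ h => potential_lt_of_extRel h⟩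

def RegionIncomp (X m n : ℕ) (l : List (ℕ × ℕ × ℕ)) : Prop :=
  ∀ p : ℕ × ℕ × ℕ, X ≤ p.1 → toLex (p.2.2, p.2.1) < toLex (m, n) →
    ∀ b ∈ l, IncompRel (· ≤ ·) p b

theorem RegionIncomp.mono {X m n m' n' : ℕ} {l : List (ℕ × ℕ × ℕ)}
    (h : toLex (m', n') ≤ toLex (m, n)) (hl : RegionIncomp X m n l) : RegionIncomp X m' n' l :=
  fun p hX hp => hl p hX (hp.trans_le h)

theorem exists_extRel_regionIncomp {X m n : ℕ} {l : IncSeqs (ℕ × ℕ × ℕ)}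
    (h : RegionIncomp X m (n + 1) l.1) :
    ∃ l' : IncSeqs (ℕ × ℕ × ℕ), extRel _ l' l ∧ RegionIncomp (X + 1) m n l'.1 := by
  have hq : ∀ b ∈ l.1, IncompRel (· ≤ ·) (X, n, m) b :=
    h _ le_rfl (Prod.Lex.toLex_lt_toLex.2 (Or.inr ⟨rfl, n.lt_succ_self⟩))
  refine ⟨⟨l.1 ++ [(X, n, m)], by simp, ?_⟩, ⟨List.prefix_append _ _, by simp⟩, ?_⟩
  · exact List.pairwise_append.2 ⟨l.2.2, List.pairwise_singleton _ _,
      fun b hb _ hq' => List.mem_singleton.1 hq' ▸ (hq b hb).symm⟩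
  · intro p hX hp b hb
    rcases List.mem_append.1 hb with hb | hb
    · exact h p (by omega) (hp.trans (Prod.Lex.toLex_lt_toLex.2 (Or.inr ⟨rfl, n.lt_succ_self⟩)))
        b hb
    · rw [List.mem_singleton.1 hb]
      simp only [Prod.Lex.toLex_lt_toLex] at hp
      simp only [IncompRel, Prod.le_def]
      omega

theorem le_rank_add_one_of_regionIncomp {m n : ℕ}
    (ih : ∀ X (l : IncSeqs (ℕ × ℕ × ℕ)), RegionIncomp X m n l.1 →
      ω * m + n ≤ IsWellFounded.rank (extRel _) l)
    {X : ℕ} {l : IncSeqs (ℕ × ℕ × ℕ)} (h : RegionIncomp X m (n + 1) l.1) :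
    ω * m + (n + 1 : ℕ) ≤ IsWellFounded.rank (extRel _) l := by
  obtain ⟨l', hl', h'⟩ := exists_extRel_regionIncomp h
  rw [Nat.cast_add_one, ← add_assoc, ← Order.succ_eq_add_one]
  exact Order.succ_le_of_lt ((ih _ _ h').trans_lt (IsWellFounded.rank_lt_of_rel hl'))

theorem le_rank_of_regionIncomp (m n : ℕ) {X : ℕ} {l : IncSeqs (ℕ × ℕ × ℕ)}
    (h : RegionIncomp X m n l.1) : ω * m + n ≤ IsWellFounded.rank (extRel _) l := by
  induction m generalizing n X l with
  | zero =>
    induction n generalizing X l with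
    | zero => simp
    | succ n ih => exact le_rank_add_one_of_regionIncomp (fun _ _ => ih) h
  | succ m ihm =>
    induction n generalizing X l with
    | zero =>
      rw [Nat.cast_add_one, mul_add_one, Nat.cast_zero, add_zero,
        Ordinal.add_le_iff_of_isSuccLimit isSuccLimit_omega0]
      intro c hc
      obtain ⟨n, rfl⟩ := Ordinal.lt_omega0.1 hc
      exact ihm n (h.mono (Prod.Lex.toLex_le_toLex.2 (Or.inl m.lt_succ_self)))
    | succ n ih => exact le_rank_add_one_of_regionIncomp (fun _ _ => ih) h

theorem omega0_sq_le_width : ω ^ 2 ≤ width (ℕ × ℕ × ℕ) := by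
  refine le_of_forall_lt fun c hc => ?_
  obtain ⟨m, hm, hcm⟩ := (Ordinal.lt_mul_iff_of_isSuccLimit isSuccLimit_omega0).1 (sq ω ▸ hc)
  obtain ⟨m, rfl⟩ := Ordinal.lt_omega0.1 hm
  have hroom : RegionIncomp 1 m 0 [(0, 0, m)] := by
    intro p hX hp b hb
    rw [List.mem_singleton.1 hb]
    simp only [Prod.Lex.toLex_lt_toLex] at hp
    simp only [IncompRel, Prod.le_def]
    omega
  calc c < ω * m := hcm
    _ = ω * m + (0 : ℕ) := by simp
    _ ≤ IsWellFounded.rank (extRel _) (⟨[(0, 0, m)], by simp, by simp⟩ : IncSeqs _) :=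
      le_rank_of_regionIncomp m 0 hroom
    _ < width (ℕ × ℕ × ℕ) := rank_lt_relRank _

/-- `w(ω × ω × ω) = ω²` for the componentwise order. -/
theorem stmt_19 : width (ℕ × ℕ × ℕ) = Ordinal.omega0 ^ (2 : ℕ) :=
  le_antisymm width_le_omega0_sq omega0_sq_le_width
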